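/- For any R-module A and any R-linear map ρ: A → A⊗A, setting ν = ρ - Perm∘ρ (where Perm swaps the two tensor factors), the following identity holds: (id + τ + τ²)∘(id⊗ν)∘ν = -(id + τ + τ²)∘(id - P¹²)∘((ρ⊗id)∘ρ - (id⊗ρ)∘ρ), where τ is the cyclic permutation x⊗y⊗z ↦ z⊗x⊗y on A⊗A⊗A and P¹² permutes the first two tensor factors. -/
import Mathlib

open TensorProduct

/-- For any `R`-linear `ρ : A → A ⊗ A`, with `ν = ρ - Perm ∘ ρ`, one has
`(id + τ + τ²) ∘ (id ⊗ ν) ∘ ν = -(id + τ + τ²) ∘ (id - P¹²) ∘ ((ρ⊗id)ρ - (id⊗ρ)ρ)`. -/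
theorem loops_trees_stmt0 {R : Type*} [CommRing R] {A : Type*} [AddCommGroup A] [Module R A]
    (ρ : A →ₗ[R] A ⊗[R] A) :
    let Perm : A ⊗[R] A →ₗ[R] A ⊗[R] A := (TensorProduct.comm R A A).toLinearMap
    let τ : A ⊗[R] (A ⊗[R] A) →ₗ[R] A ⊗[R] (A ⊗[R] A) :=
      (TensorProduct.comm R (A ⊗[R] A) A).toLinearMap ∘ₗ
        (TensorProduct.assoc R A A A).symm.toLinearMap
    let P12 : A ⊗[R] (A ⊗[R] A) →ₗ[R] A ⊗[R] (A ⊗[R] A) :=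
      (TensorProduct.assoc R A A A).toLinearMap ∘ₗ
        (TensorProduct.map (TensorProduct.comm R A A).toLinearMap LinearMap.id) ∘ₗ
        (TensorProduct.assoc R A A A).symm.toLinearMap
    let ν : A →ₗ[R] A ⊗[R] A := ρ - Perm ∘ₗ ρ
    (LinearMap.id + τ + τ ∘ₗ τ) ∘ₗ (TensorProduct.map LinearMap.id ν) ∘ₗ ν =
      - ((LinearMap.id + τ + τ ∘ₗ τ) ∘ₗ (LinearMap.id - P12) ∘ₗ
        ((TensorProduct.assoc R A A A).toLinearMap ∘ₗ (TensorProduct.map ρ LinearMap.id) ∘ₗ ρ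
          - (TensorProduct.map LinearMap.id ρ) ∘ₗ ρ)) := by
  intro Perm τ P12 ν
  set S : A ⊗[R] (A ⊗[R] A) →ₗ[R] A ⊗[R] (A ⊗[R] A) := LinearMap.id + τ + τ ∘ₗ τ with hS
  set P23 : A ⊗[R] (A ⊗[R] A) →ₗ[R] A ⊗[R] (A ⊗[R] A) :=
    TensorProduct.map LinearMap.id Perm with hP23def
  have hSτ : S ∘ₗ τ = S := by
    ext x y z
    simp [S, τ]
    abel
  have hSP23 : S ∘ₗ P23 = S ∘ₗ P12 := by
    ext x y z
    simp [S, τ, P23, P12, Perm]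
    abel
  have hSP23τ : (S ∘ₗ P23) ∘ₗ τ = S ∘ₗ P12 := by
    ext x y z
    simp [S, τ, P23, P12, Perm]
    abel
  have hSτ' : ∀ X : A →ₗ[R] A ⊗[R] (A ⊗[R] A), S ∘ₗ τ ∘ₗ X = S ∘ₗ X := fun X => by
    rw [← LinearMap.comp_assoc, hSτ]
  have hSP23' : ∀ X : A →ₗ[R] A ⊗[R] (A ⊗[R] A), S ∘ₗ P23 ∘ₗ X = S ∘ₗ P12 ∘ₗ X := fun X => by
    rw [← LinearMap.comp_assoc, hSP23, LinearMap.comp_assoc]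
  have hSP23τ' : ∀ X : A →ₗ[R] A ⊗[R] (A ⊗[R] A),
      S ∘ₗ P23 ∘ₗ τ ∘ₗ X = S ∘ₗ P12 ∘ₗ X := fun X => by
    rw [← LinearMap.comp_assoc, ← LinearMap.comp_assoc, hSP23τ, LinearMap.comp_assoc]
  have h1 : TensorProduct.map (LinearMap.id (M := A)) ν =
      (LinearMap.id - P23) ∘ₗ TensorProduct.map LinearMap.id ρ := by
    ext x y
    simp [ν, P23, Perm, tmul_sub]
  have h2 : TensorProduct.map (LinearMap.id (M := A)) ρ ∘ₗ Perm =
      τ ∘ₗ (TensorProduct.assoc R A A A).toLinearMap ∘ₗ TensorProduct.map ρ LinearMap.id := by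
    ext x y
    simp [τ, Perm]
  have hν : ν = ρ - Perm ∘ₗ ρ := rfl
  rw [h1, hν]
  simp only [LinearMap.comp_assoc, LinearMap.comp_sub, LinearMap.sub_comp, LinearMap.id_comp]
  rw [← LinearMap.comp_assoc ρ Perm (TensorProduct.map LinearMap.id ρ), h2]
  simp only [LinearMap.comp_assoc]
  rw [hSτ', hSP23', hSP23τ']
  abel
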